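/- arXiv:0708.0225 — 8 statements merged into one kernel-verified Lean document; each statement's English description precedes it below -/
import Mathlib

section
/- Let r < n, let α, β ∈ S_n be permutations fixing every point in {r+1,...,n}, and let α₁, β₁ ∈ S_n fix every point in {1,...,r}. Then the number of conjugacy classes of S_n meeting the product (restriction of α to S_r)^{S_r} · (restriction of β)^{S_r} is at most the number of conjugacy classes of S_n meeting (αα₁)^{S_n} · (ββ₁)^{S_n}. -/
/-- The conjugacy class of `a` in `G`. -/
def conjClass {G : Type*} [Group G] (a : G) : Set G := {x | IsConj a x}

/-- The product of two subsets of a group. -/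
def setProd {G : Type*} [Group G] (C D : Set G) : Set G := {z | ∃ c ∈ C, ∃ d ∈ D, z = c * d}

/-- The number of conjugacy classes meeting a set `X`. -/
noncomputable def eta {G : Type*} [Group G] (X : Set G) : ℕ :=
  Nat.card {c : ConjClasses G // (c.carrier ∩ X).Nonempty}


/-- Conjugacy class of `a` under conjugation by the copy of `S_r` inside `S_n`, i.e.
by permutations fixing every point of index `≥ r`. -/
def subClass (n r : ℕ) (a : Equiv.Perm (Fin n)) : Set (Equiv.Perm (Fin n)) :=
  {x | ∃ σ : Equiv.Perm (Fin n), (∀ i : Fin n, r ≤ (i : ℕ) → σ i = i) ∧ x = σ⁻¹ * a * σ}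


/-!
Both sides can be counted by cycle types, since conjugacy in `S_n` is equality of cycle types.
With `g = α₁ β₁`, every element `x` of the left-hand product is supported on `{1, …, r}` while `g`
is supported on the complement, so `x ↦ x g` sends the left-hand product into the right-hand one
and adds the constant `cycleType g` to cycle types, which is injective.
-/

open Equiv MulAction

section ConjClasses

variable {G : Type*} [Group G]

lemma eta_eq_ncard_image_mk (X : Set G) : eta X = (ConjClasses.mk '' X).ncard := by
  rw [eta, ← Nat.card_coe_set_eq]
  congr 2
  ext c
  simp only [Set.mem_image, ← ConjClasses.mem_carrier_iff_mk_eq]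
  exact ⟨fun ⟨x, hc, hX⟩ => ⟨x, hX, hc⟩, fun ⟨x, hX, hc⟩ => ⟨x, hc, hX⟩⟩

lemma eta_eq_ncard_image_of_isConj_iff {β : Type*} (φ : G → β)
    (hφ : ∀ x y, φ x = φ y ↔ IsConj x y) (X : Set G) : eta X = (φ '' X).ncard := by
  let φ' : ConjClasses G → β := Quotient.lift φ fun x y h => (hφ x y).2 h
  have hφ' : φ'.Injective := by
    rintro ⟨x⟩ ⟨y⟩ h
    exact ConjClasses.mk_eq_mk_iff_isConj.2 ((hφ x y).1 h)
  rw [eta_eq_ncard_image_mk, ← Set.ncard_image_of_injective _ hφ', Set.image_image]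
  rfl

lemma conj_mul_conj_mul_mem_setProd {H K : Subgroup G} (hHK : ∀ h ∈ H, ∀ k ∈ K, Commute h k)
    {a b a₁ b₁ s t : G} (hb : b ∈ H) (hs : s ∈ H) (ht : t ∈ H) (ha₁ : a₁ ∈ K) (hb₁ : b₁ ∈ K) :
    s⁻¹ * a * s * (t⁻¹ * b * t) * (a₁ * b₁) ∈
      setProd (conjClass (a * a₁)) (conjClass (b * b₁)) := by
  refine ⟨s⁻¹ * (a * a₁) * s, isConj_iff.2 ⟨s⁻¹, by group⟩,
    t⁻¹ * (b * b₁) * t, isConj_iff.2 ⟨t⁻¹, by group⟩, ?_⟩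
  have hsa₁ : a₁ * s = s * a₁ := (hHK s hs a₁ ha₁).eq.symm
  have htb₁ : b₁ * t = t * b₁ := (hHK t ht b₁ hb₁).eq.symm
  have hba₁ : a₁ * (t⁻¹ * b * t) = t⁻¹ * b * t * a₁ :=
    (hHK _ (H.mul_mem (H.mul_mem (H.inv_mem ht) hb) ht) a₁ ha₁).eq.symm
  calc s⁻¹ * a * s * (t⁻¹ * b * t) * (a₁ * b₁)
      = s⁻¹ * a * s * (a₁ * (t⁻¹ * b * t)) * b₁ := by rw [hba₁]; group
    _ = s⁻¹ * a * (a₁ * s) * (t⁻¹ * b * (b₁ * t)) := by rw [hsa₁, htb₁]; group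
    _ = s⁻¹ * (a * a₁) * s * (t⁻¹ * (b * b₁) * t) := by group

end ConjClasses

namespace Equiv.Perm

variable {α : Type*}

lemma mem_fixingSubgroup_iff_apply {s : Set α} {σ : Perm α} :
    σ ∈ fixingSubgroup (Perm α) s ↔ ∀ i ∈ s, σ i = i :=
  mem_fixingSubgroup_iff _

lemma disjoint_of_mem_fixingSubgroup_compl {s : Set α} {x y : Perm α}
    (hx : x ∈ fixingSubgroup (Perm α) s) (hy : y ∈ fixingSubgroup (Perm α) sᶜ) : x.Disjoint y :=
  fun i => (em (i ∈ s)).imp (mem_fixingSubgroup_iff_apply.1 hx i)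
    (mem_fixingSubgroup_iff_apply.1 hy i)

lemma commute_of_mem_fixingSubgroup_compl {s : Set α} :
    ∀ x ∈ fixingSubgroup (Perm α) s, ∀ y ∈ fixingSubgroup (Perm α) sᶜ, Commute x y :=
  fun _ hx _ hy => (disjoint_of_mem_fixingSubgroup_compl hx hy).commute

variable [Fintype α] [DecidableEq α]

lemma eta_eq_ncard_image_cycleType (X : Set (Perm α)) : eta X = (cycleType '' X).ncard :=
  eta_eq_ncard_image_of_isConj_iff _ (fun _ _ => isConj_iff_cycleType_eq.symm) X

lemma eta_le_eta_of_forall_mul_mem {s : Set α} {g : Perm α} {X Y : Set (Perm α)}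
    (hX : X ⊆ fixingSubgroup (Perm α) s) (hg : g ∈ fixingSubgroup (Perm α) sᶜ)
    (hXY : ∀ x ∈ X, x * g ∈ Y) : eta X ≤ eta Y := by
  rw [eta_eq_ncard_image_cycleType, eta_eq_ncard_image_cycleType]
  refine Set.ncard_le_ncard_of_injOn (· + g.cycleType) ?_ (add_left_injective _).injOn
    ((Set.toFinite Y).image _)
  rintro _ ⟨x, hx, rfl⟩
  exact ⟨x * g, hXY x hx, (disjoint_of_mem_fixingSubgroup_compl (hX hx) hg).cycleType_mul⟩

end Equiv.Perm

theorem stmt5_general (n r : ℕ) (α β α₁ β₁ : Equiv.Perm (Fin n))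
    (hα : ∀ i : Fin n, r ≤ (i : ℕ) → α i = i)
    (hβ : ∀ i : Fin n, r ≤ (i : ℕ) → β i = i)
    (hα₁ : ∀ i : Fin n, (i : ℕ) < r → α₁ i = i)
    (hβ₁ : ∀ i : Fin n, (i : ℕ) < r → β₁ i = i) :
    eta (setProd (subClass n r α) (subClass n r β)) ≤
      eta (setProd (conjClass (α * α₁)) (conjClass (β * β₁))) := by
  set H := fixingSubgroup (Perm (Fin n)) {i : Fin n | r ≤ (i : ℕ)}
  set K := fixingSubgroup (Perm (Fin n)) {i : Fin n | r ≤ (i : ℕ)}ᶜ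
  have hH {σ : Perm (Fin n)} (hσ : ∀ i : Fin n, r ≤ (i : ℕ) → σ i = i) : σ ∈ H :=
    Perm.mem_fixingSubgroup_iff_apply.2 hσ
  have hK {σ : Perm (Fin n)} (hσ : ∀ i : Fin n, (i : ℕ) < r → σ i = i) : σ ∈ K :=
    Perm.mem_fixingSubgroup_iff_apply.2 fun i hi => hσ i (not_le.1 hi)
  have hconj {a σ : Perm (Fin n)} (ha : a ∈ H) (hσ : σ ∈ H) : σ⁻¹ * a * σ ∈ H :=
    H.mul_mem (H.mul_mem (H.inv_mem hσ) ha) hσ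
  refine Perm.eta_le_eta_of_forall_mul_mem (g := α₁ * β₁) ?_ (K.mul_mem (hK hα₁) (hK hβ₁)) ?_
  · rintro _ ⟨_, ⟨s, hs, rfl⟩, _, ⟨t, ht, rfl⟩, rfl⟩
    exact H.mul_mem (hconj (hH hα) (hH hs)) (hconj (hH hβ) (hH ht))
  · rintro _ ⟨_, ⟨s, hs, rfl⟩, _, ⟨t, ht, rfl⟩, rfl⟩
    exact conj_mul_conj_mul_mem_setProd Perm.commute_of_mem_fixingSubgroup_compl (hH hβ) (hH hs)
      (hH ht) (hK hα₁) (hK hβ₁)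

theorem stmt5 (n r : ℕ) (hr : r < n) (α β α₁ β₁ : Equiv.Perm (Fin n))
    (hα : ∀ i : Fin n, r ≤ (i : ℕ) → α i = i)
    (hβ : ∀ i : Fin n, r ≤ (i : ℕ) → β i = i)
    (hα₁ : ∀ i : Fin n, (i : ℕ) < r → α₁ i = i)
    (hβ₁ : ∀ i : Fin n, (i : ℕ) < r → β₁ i = i) :
    eta (setProd (subClass n r α) (subClass n r β)) ≤
      eta (setProd (conjClass (α * α₁)) (conjClass (β * β₁))) :=
  stmt5_general n r α β α₁ β₁ hα hβ hα₁ hβ₁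
end

section
/- Let m ≥ 4 and n > m. Let α, β ∈ S_m with α fixed point free and β ≠ e, regarded as elements of S_n by acting trivially on {m+1,...,n}. Then η(α^{S_m} β^{S_m}) < η(α^{S_n} β^{S_n}). -/
/-! Elements of `α^{S_m} β^{S_m}` fix every point `≥ m`, so they move at most `m` points, and the
number of moved points is a conjugacy invariant. It thus suffices to find a product `α' β'` of
conjugates that moves all of `0, …, m`. Take `β' = (j m) β (j m)` for a point `j` moved by `β`, and
`α' = ρ⁻¹ α ρ` with `ρ ∈ S_m`; then `α' β'` moves `m`, `j` and `β⁻¹ j`, as well as every other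
point, provided `α' (β x) ≠ x` for the at most `m - 2` remaining points `x` of the support of `β`.
Each of these conditions fails for at most a `1/(m - 1)` fraction of `ρ ∈ S_m`, so some `ρ`
satisfies all of them. -/

open Equiv Finset

namespace Equiv.Perm

variable {α : Type*} [DecidableEq α] [Fintype α]

theorem apply_mem_iff_of_support_subset {σ : Perm α} {M : Finset α} (hσ : σ.support ⊆ M)
    {x : α} : σ x ∈ M ↔ x ∈ M := by
  by_cases h : x ∈ σ.support
  · exact iff_of_true (hσ (apply_mem_support.2 h)) (hσ h)
  · rw [notMem_support.1 h]

theorem support_mul_swap_subset {σ : Perm α} {M : Finset α} (hσ : σ.support ⊆ M) {a b : α}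
    (ha : a ∈ M) (hb : b ∈ M) : (σ * swap a b).support ⊆ M := by
  refine (support_mul_le σ (swap a b)).trans (sup_le hσ ?_)
  rcases eq_or_ne a b with rfl | hab
  · simp
  · rw [support_swap hab]
    exact insert_subset ha (singleton_subset_iff.2 hb)

theorem card_sub_one_mul_card_filter_le (M : Finset α) (γ : Perm α) {u w : α} (hw : w ∈ M)
    (huw : u ≠ w) :
    (#M - 1) * #{ρ : Perm α | ρ.support ⊆ M ∧ γ (ρ u) = ρ w} ≤
      #{ρ : Perm α | ρ.support ⊆ M} := by
  set B : Finset (Perm α) := {ρ | ρ.support ⊆ M ∧ γ (ρ u) = ρ w}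
  calc (#M - 1) * #B ≤ #(M.erase u ×ˢ B) := by
        rw [card_product]
        exact Nat.mul_le_mul_right _ pred_card_le_card_erase
    _ ≤ #{ρ : Perm α | ρ.support ⊆ M} := by
        refine card_le_card_of_injOn (fun tρ => tρ.2 * swap w tρ.1) ?_ ?_
        · rintro ⟨t, ρ⟩ h
          simp only [B, coe_product, Set.mem_prod, mem_coe, mem_erase, mem_filter, mem_univ,
            true_and] at h ⊢
          exact support_mul_swap_subset h.2.1 hw h.1.2
        · rintro ⟨t, ρ⟩ h ⟨t', ρ'⟩ h' heq
          simp only [B, coe_product, Set.mem_prod, mem_coe, mem_erase, mem_filter, mem_univ,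
            true_and] at h h' heq
          -- evaluating `ρ * swap w t = ρ' * swap w t'` at `u` and at `t` recovers `t` and `ρ`
          have hu : ρ u = ρ' u := by
            simpa [swap_apply_of_ne_of_ne huw h.1.1.symm,
              swap_apply_of_ne_of_ne huw h'.1.1.symm] using congr($heq u)
          have hw' : ρ w = ρ' w := by rw [← h.2.2, ← h'.2.2, hu]
          have ht : t = t' := by
            simpa only [Perm.mul_apply, swap_apply_right, hw', EmbeddingLike.apply_eq_iff_eq,
              eq_comm (a := w), swap_apply_eq_iff, swap_apply_left] using congr($heq t)
          subst ht
          exact Prod.ext rfl (mul_right_cancel heq)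

theorem exists_support_subset_forall_apply_ne (M S : Finset α) (γ : Perm α) (v : α → α)
    (hSM : S ⊆ M) (hv : ∀ i ∈ S, v i ≠ i) (hS : #S + 1 < #M) :
    ∃ ρ : Perm α, ρ.support ⊆ M ∧ ∀ i ∈ S, γ (ρ (v i)) ≠ ρ i := by
  by_contra! h
  set H : Finset (Perm α) := {ρ | ρ.support ⊆ M}
  have hH : H ⊆ S.biUnion fun i => {ρ : Perm α | ρ.support ⊆ M ∧ γ (ρ (v i)) = ρ i} := by
    intro ρ hρ
    have hρM : ρ.support ⊆ M := (mem_filter.1 hρ).2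
    obtain ⟨i, hi, hρi⟩ := h ρ hρM
    exact mem_biUnion.2 ⟨i, hi, mem_filter.2 ⟨mem_univ ρ, hρM, hρi⟩⟩
  have hH_pos : 0 < #H := card_pos.2 ⟨1, by simp [H]⟩
  have : (#M - 1) * #H ≤ #S * #H :=
    calc (#M - 1) * #H
        ≤ (#M - 1) * ∑ i ∈ S, #{ρ : Perm α | ρ.support ⊆ M ∧ γ (ρ (v i)) = ρ i} :=
          Nat.mul_le_mul_left _ ((card_le_card hH).trans card_biUnion_le)
      _ = ∑ i ∈ S, (#M - 1) * #{ρ : Perm α | ρ.support ⊆ M ∧ γ (ρ (v i)) = ρ i} := mul_sum ..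
      _ ≤ ∑ _i ∈ S, #H :=
          sum_le_sum fun i hi => card_sub_one_mul_card_filter_le M γ (hSM hi) (hv i hi)
      _ = #S * #H := by rw [sum_const, smul_eq_mul]
  have := Nat.le_of_mul_le_mul_right this hH_pos
  omega

theorem exists_isConj_support_eq_forall_apply_ne {σ : Perm α} {M S : Finset α}
    (hσ : σ.support = M) (v : α → α) (hSM : S ⊆ M) (hv : ∀ x ∈ S, v x ≠ x)
    (hS : #S + 1 < #M) :
    ∃ σ' : Perm α, IsConj σ σ' ∧ σ'.support = M ∧ ∀ x ∈ S, σ' (v x) ≠ x := by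
  obtain ⟨ρ, hρ, hρv⟩ := exists_support_subset_forall_apply_ne M S σ v hSM hv hS
  refine ⟨ρ⁻¹ * σ * ρ, isConj_iff.2 ⟨ρ⁻¹, by group⟩, ?_, fun x hx => ?_⟩
  · ext x
    rw [mem_support, Perm.mul_apply, Perm.mul_apply, Ne, Perm.inv_eq_iff_eq, ← Ne,
      ← mem_support, hσ, apply_mem_iff_of_support_subset hρ]
  · rw [Perm.mul_apply, Perm.mul_apply, Ne, Perm.inv_eq_iff_eq]
    exact hρv x hx

theorem insert_subset_support_mul_swap_conj {σ τ : Perm α} {M : Finset α} {j p : α}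
    (hσ : σ.support = M) (hτ : τ.support ⊆ M) (hj : j ∈ τ.support) (hp : p ∉ M)
    (hστ : ∀ x ∈ (τ.support.erase j).erase (τ⁻¹ j), σ (τ x) ≠ x) :
    insert p M ⊆ (σ * (swap j p * τ * swap j p)).support := by
  have hjM : j ∈ M := hτ hj
  have hτp : τ p = p := notMem_support.1 fun h => hp (hτ h)
  have hσM : ∀ {x}, x ∈ M → σ x ≠ x := fun hx => mem_support.1 (hσ ▸ hx)
  intro x hx
  rw [mem_support]
  simp only [Perm.mul_apply]
  rcases mem_insert.1 hx with rfl | hxM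
  · have hτj : τ j ∈ M := (apply_mem_iff_of_support_subset hτ).2 hjM
    rw [swap_apply_right, swap_apply_of_ne_of_ne (mem_support.1 hj) (ne_of_mem_of_not_mem hτj hp)]
    exact ne_of_mem_of_not_mem ((apply_mem_iff_of_support_subset hσ.le).2 hτj) hp
  have hxp : x ≠ p := ne_of_mem_of_not_mem hxM hp
  by_cases hxj : x = j
  · subst hxj
    rw [swap_apply_left, hτp, swap_apply_right]
    exact hσM hxM
  by_cases hxτj : x = τ⁻¹ j
  · rw [swap_apply_of_ne_of_ne hxj hxp, Perm.eq_inv_iff_eq.1 hxτj, swap_apply_left,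
      notMem_support.1 (hσ ▸ hp)]
    exact hxp.symm
  have hτxj : τ x ≠ j := fun h => hxτj (Perm.eq_inv_iff_eq.2 h)
  have hτxp : τ x ≠ p :=
    ne_of_mem_of_not_mem ((apply_mem_iff_of_support_subset hτ).2 hxM) hp
  rw [swap_apply_of_ne_of_ne hxj hxp, swap_apply_of_ne_of_ne hτxj hτxp]
  by_cases hτx : τ x = x
  · rw [hτx]
    exact hσM hxM
  · exact hστ x (mem_erase.2 ⟨hxτj, mem_erase.2 ⟨hxj, mem_support.2 hτx⟩⟩)

theorem exists_mem_setProd_conjClass_insert_subset_support {σ τ : Perm α} {M : Finset α} {p : α}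
    (hσ : σ.support = M) (hτ : τ.support ⊆ M) (hτ1 : τ ≠ 1) (hp : p ∉ M) :
    ∃ z ∈ setProd (conjClass σ) (conjClass τ), insert p M ⊆ z.support := by
  obtain ⟨j, hj⟩ := nonempty_of_ne_empty (mt support_eq_empty_iff.1 hτ1)
  have hτj : τ⁻¹ j ∈ τ.support.erase j := by
    refine mem_erase.2 ⟨fun h => mem_support.1 hj (Perm.inv_eq_iff_eq.1 h).symm, ?_⟩
    rw [← support_inv]
    exact apply_mem_support.2 (by rwa [support_inv])
  set S := (τ.support.erase j).erase (τ⁻¹ j)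
  have hS : #S + 2 = #τ.support := by
    rw [← card_erase_add_one hj, ← card_erase_add_one hτj]
  obtain ⟨σ', hσσ', hσ', hσ'τ⟩ := exists_isConj_support_eq_forall_apply_ne hσ τ (S := S)
    (fun x hx => hτ (mem_of_mem_erase (mem_of_mem_erase hx)))
    (fun x hx => mem_support.1 (mem_of_mem_erase (mem_of_mem_erase hx)))
    (by have := card_le_card hτ; omega)
  exact ⟨_, ⟨σ', hσσ', _, isConj_iff.2 ⟨swap j p, by rw [swap_inv]⟩, rfl⟩,
    insert_subset_support_mul_swap_conj hσ' hτ hj hp hσ'τ⟩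

end Equiv.Perm

theorem setProd_mono {G : Type*} [Group G] {C C' D D' : Set G} (hC : C ⊆ C') (hD : D ⊆ D') :
    setProd C D ⊆ setProd C' D' := by
  rintro _ ⟨c, hc, d, hd, rfl⟩
  exact ⟨c, hC hc, d, hD hd, rfl⟩

theorem eta_lt_eta_of_subset {G : Type*} [Group G] [Finite G] {X Y : Set G} (hXY : X ⊆ Y)
    {z : G} (hz : z ∈ Y) (hzX : ∀ x ∈ X, ¬IsConj x z) : eta X < eta Y := by
  have heta (Z : Set G) : eta Z = Set.ncard {c : ConjClasses G | (c.carrier ∩ Z).Nonempty} :=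
    Nat.card_coe_set_eq _
  rw [heta, heta]
  refine Set.ncard_lt_ncard ⟨fun c ⟨x, hc, hx⟩ => ⟨x, hc, hXY hx⟩, fun h => ?_⟩
  obtain ⟨x, hx, hxX⟩ := h (show ConjClasses.mk z ∈ _ from ⟨z, ConjClasses.mem_carrier_mk, hz⟩)
  exact hzX x hxX (ConjClasses.mk_eq_mk_iff_isConj.1 (ConjClasses.mem_carrier_iff_mk_eq.1 hx))

theorem subClass_subset_conjClass (n r : ℕ) (a : Perm (Fin n)) : subClass n r a ⊆ conjClass a := by
  rintro _ ⟨σ, -, rfl⟩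
  exact isConj_iff.2 ⟨σ⁻¹, by group⟩

theorem support_subset_of_mem_setProd_subClass {n r : ℕ} {a b : Perm (Fin n)}
    (ha : ∀ i : Fin n, r ≤ (i : ℕ) → a i = i) (hb : ∀ i : Fin n, r ≤ (i : ℕ) → b i = i)
    {x : Perm (Fin n)} (hx : x ∈ setProd (subClass n r a) (subClass n r b)) :
    x.support ⊆ ({i | (i : ℕ) < r} : Finset (Fin n)) := by
  obtain ⟨_, ⟨σ, hσ, rfl⟩, _, ⟨τ, hτ, rfl⟩, rfl⟩ := hx
  intro i hi
  rw [mem_filter]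
  refine ⟨mem_univ i, not_le.1 fun hri => Perm.mem_support.1 hi ?_⟩
  have hσ' : σ⁻¹ i = i := Perm.inv_eq_iff_eq.2 (hσ i hri).symm
  have hτ' : τ⁻¹ i = i := Perm.inv_eq_iff_eq.2 (hτ i hri).symm
  simp only [Perm.mul_apply, hτ i hri, hb i hri, hτ', hσ i hri, ha i hri, hσ']

theorem stmt6_general (m n : ℕ) (hmn : m < n) (α β : Equiv.Perm (Fin n))
    (hα : ∀ i : Fin n, m ≤ (i : ℕ) → α i = i)
    (hβ : ∀ i : Fin n, m ≤ (i : ℕ) → β i = i)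
    (hαfpf : ∀ i : Fin n, (i : ℕ) < m → α i ≠ i)
    (hβne : β ≠ 1) :
    eta (setProd (subClass n m α) (subClass n m β)) <
      eta (setProd (conjClass α) (conjClass β)) := by
  set M : Finset (Fin n) := {i | (i : ℕ) < m}
  have hM : #M = m := by simp [M, Fin.card_filter_val_lt, hmn.le]
  have hαM : α.support = M := by
    ext i
    simp only [Perm.mem_support, M, mem_filter, mem_univ, true_and]
    exact ⟨fun h => not_le.1 fun hi => h (hα i hi), hαfpf i⟩
  have hβM : β.support ⊆ M := fun i hi =>
    mem_filter.2 ⟨mem_univ i, not_le.1 fun h => Perm.mem_support.1 hi (hβ i h)⟩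
  have hmM : (⟨m, hmn⟩ : Fin n) ∉ M := by simp [M]
  obtain ⟨z, hz, hzM⟩ :=
    Perm.exists_mem_setProd_conjClass_insert_subset_support hαM hβM hβne hmM
  refine eta_lt_eta_of_subset (setProd_mono (subClass_subset_conjClass n m α)
    (subClass_subset_conjClass n m β)) hz fun x hx hxz => ?_
  have hx_le : #x.support ≤ m := hM ▸ card_le_card (support_subset_of_mem_setProd_subClass hα hβ hx)
  have hz_ge : m + 1 ≤ #z.support := by
    simpa [card_insert_of_notMem hmM, hM] using card_le_card hzM
  obtain ⟨c, rfl⟩ := isConj_iff.1 hxz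
  rw [Perm.card_support_conj] at hz_ge
  omega

theorem stmt6 (m n : ℕ) (hm : 4 ≤ m) (hmn : m < n) (α β : Equiv.Perm (Fin n))
    (hα : ∀ i : Fin n, m ≤ (i : ℕ) → α i = i)
    (hβ : ∀ i : Fin n, m ≤ (i : ℕ) → β i = i)
    (hαfpf : ∀ i : Fin n, (i : ℕ) < m → α i ≠ i)
    (hβne : β ≠ 1) :
    eta (setProd (subClass n m α) (subClass n m β)) <
      eta (setProd (conjClass α) (conjClass β)) :=
  stmt6_general m n hmn α β hα hβ hαfpf hβne
end

section
/- For any nonidentity α, β ∈ S_n, there exists γ ∈ α^{S_n} β^{S_n} having at least one fixed point. -/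
theorem stmt9 (n : ℕ) (hn : 2 ≤ n) (α β : Equiv.Perm (Fin n)) (hα : α ≠ 1) (hβ : β ≠ 1) :
    ∃ γ ∈ setProd (conjClass α) (conjClass β), ∃ i : Fin n, γ i = i := by
  obtain ⟨a, ha⟩ : ∃ a, α a ≠ a := by
    by_contra h
    push_neg at h
    exact hα (Equiv.ext fun x => h x)
  obtain ⟨c, hc⟩ : ∃ c, β c ≠ c := by
    by_contra h
    push_neg at h
    exact hβ (Equiv.ext fun x => h x)
  set b := α a with hb
  set d := β c with hd
  set σ₁ : Equiv.Perm (Fin n) := Equiv.swap c b with hσ₁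
  have hσ₁c : σ₁ c = b := Equiv.swap_apply_left c b
  have hne : σ₁ d ≠ b := by
    intro h
    exact hc (σ₁.injective (by rw [h, hσ₁c])).symm
  set σ₂ : Equiv.Perm (Fin n) := Equiv.swap (σ₁ d) a with hσ₂
  have hσ₂b : σ₂ b = b := Equiv.swap_apply_of_ne_of_ne (fun h => hne h.symm) ha
  set σ := σ₂ * σ₁ with hσ
  have hσc : σ c = b := by simp [hσ, hσ₁c, hσ₂b]
  have hσd : σ d = a := by simp [hσ, hσ₂]
  refine ⟨α * (σ * β * σ⁻¹), ⟨α, IsConj.refl α, σ * β * σ⁻¹, ?_, rfl⟩, b, ?_⟩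
  · exact isConj_iff.2 ⟨σ, rfl⟩
  · have h1 : σ⁻¹ b = c := by rw [← hσc]; exact σ.symm_apply_apply c
    simp only [Equiv.Perm.mul_apply]
    rw [show (σ⁻¹ : Equiv.Perm (Fin n)) b = c from h1, ← hd, hσd, ← hb]
end

section
/- Let n ≥ 7 and α, β ∈ S_n nonidentity. If at least one of α, β has a cycle of length at least three, and at least one of α, β is fixed point free, then there exists σ ∈ S_n such that σ⁻¹ασ·β has exactly one fixed point. -/
/-!
Write `ρ = σ⁻¹ α σ` and `δ = β⁻¹`; the fixed points of `ρ β` are carried by `β` onto the points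
where `ρ` and `δ` coincide, so it suffices to find a conjugate `ρ` of `α` coinciding with `δ` at a
single point `j₁`, chosen with `δ j₁ ≠ j₁`. Among the conjugates with `ρ j₁ = δ j₁` and
`ρ (ρ j₁) ≠ j₁` (available because `α` has a cycle of length at least three), take one with the
fewest coincidences. Any further coincidence `j₀` moves under `δ` by fixed-point freeness, and
conjugating `ρ` by a transposition `(j₀ q)` or `(δ j₀ q)` removes it without creating new ones,
as long as `q` avoids six points; this is where `n ≥ 7` enters. When `β` carries the long cycle
instead, swap the roles of `α` and `β`: `p q` and `q p` have equally many fixed points.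
-/

open Finset

theorem Finset.exists_notMem_notMem_of_card_add_lt {X : Type*} [Fintype X] [DecidableEq X]
    {s t : Finset X} (h : #s + #t < Fintype.card X) : ∃ q ∉ s, q ∉ t := by
  obtain ⟨q, -, hq⟩ := exists_mem_notMem_of_card_lt_card (s := s ∪ t) (t := univ)
    (by rw [card_univ]; exact (card_union_le s t).trans_lt h)
  exact ⟨q, fun h => hq (mem_union_left _ h), fun h => hq (mem_union_right _ h)⟩

namespace Equiv.Perm

variable {X : Type*}

theorem forall_apply_ne_self_of_isConj {α ρ : Perm X} (h : IsConj α ρ) (hα : ∀ t, α t ≠ t) :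
    ∀ t, ρ t ≠ t := by
  obtain ⟨c, rfl⟩ := isConj_iff.mp h
  intro t ht
  exact hα (c⁻¹ t) (eq_inv_iff_eq.mpr ht)

theorem exists_apply_apply_ne_of_mem_cycleType [Fintype X] [DecidableEq X] {α : Perm X} {k : ℕ}
    (hk : k ∈ α.cycleType) (h3 : 3 ≤ k) : ∃ x, α (α x) ≠ x := by
  by_contra! h
  have hsq : α ^ 2 = 1 := Perm.ext fun x => by simp [sq, h]
  have := Nat.le_of_dvd two_pos ((dvd_of_mem_cycleType hk).trans (orderOf_dvd_of_pow_eq_one hsq))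
  omega

variable [Fintype X] [DecidableEq X]

def coincidences (ρ δ : Perm X) : Finset X := univ.filter fun t => ρ t = δ t

@[simp]
theorem mem_coincidences {ρ δ : Perm X} {t : X} : t ∈ coincidences ρ δ ↔ ρ t = δ t := by
  simp [coincidences]

theorem coincidences_inv (ρ δ : Perm X) :
    coincidences ρ⁻¹ δ⁻¹ = (coincidences ρ δ).map ρ.toEmbedding := by
  ext t
  rw [mem_map_equiv, mem_coincidences, mem_coincidences, eq_comm, inv_eq_iff_eq]
  simp

theorem card_coincidences_inv (ρ δ : Perm X) :
    #(coincidences ρ⁻¹ δ⁻¹) = #(coincidences ρ δ) := by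
  rw [coincidences_inv, card_map]

theorem coincidences_swap_conj_subset_erase {ρ δ : Perm X} {j₀ q : X}
    (hj₀ : ρ j₀ = δ j₀) (hmoved : δ j₀ ≠ j₀)
    (hq : q ∉ ({j₀, δ j₀, δ (ρ⁻¹ j₀), ρ (δ⁻¹ j₀)} : Finset X)) :
    coincidences (swap j₀ q * ρ * swap j₀ q) δ ⊆ (coincidences ρ δ).erase j₀ := by
  -- Conjugating by `swap j₀ q` changes `ρ` only at `j₀`, `q` and their preimages under `ρ`;
  -- the excluded values of `q` are those for which one of these becomes a coincidence.
  intro t ht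
  simp only [mem_insert, mem_singleton, not_or, coe_inv] at hq
  simp only [mem_coincidences, mul_apply, swap_apply_def, mem_erase] at ht ⊢
  split_ifs at ht <;> grind [apply_eq_iff_eq, apply_symm_apply, symm_apply_apply]

theorem card_coincidences_swap_conj_lt {ρ δ : Perm X} {j₀ q : X}
    (hj₀ : ρ j₀ = δ j₀) (hmoved : δ j₀ ≠ j₀)
    (hq : q ∉ ({j₀, δ j₀, δ (ρ⁻¹ j₀), ρ (δ⁻¹ j₀)} : Finset X)) :
    #(coincidences (swap j₀ q * ρ * swap j₀ q) δ) < #(coincidences ρ δ) :=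
  (card_le_card (coincidences_swap_conj_subset_erase hj₀ hmoved hq)).trans_lt
    (card_erase_lt_of_mem (mem_coincidences.mpr hj₀))

theorem card_coincidences_swap_apply_conj_lt {ρ δ : Perm X} {j₀ q : X}
    (hj₀ : ρ j₀ = δ j₀) (hmoved : δ j₀ ≠ j₀)
    (hq : q ∉ ({δ j₀, j₀, δ⁻¹ (ρ (δ j₀)), ρ⁻¹ (δ (δ j₀))} : Finset X)) :
    #(coincidences (swap (δ j₀) q * ρ * swap (δ j₀) q) δ) < #(coincidences ρ δ) := by
  -- Inversion maps the coincidences of `(ρ, δ)` onto those of `(ρ⁻¹, δ⁻¹)`, sending `j₀` to `δ j₀`.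
  have h := card_coincidences_swap_conj_lt (ρ := ρ⁻¹) (δ := δ⁻¹) (j₀ := δ j₀) (q := q)
    (by rw [inv_eq_iff_eq]; simp [hj₀]) (by simpa using hmoved.symm) (by simpa using hq)
  rwa [← card_coincidences_inv ρ, ← card_coincidences_inv, mul_inv_rev, mul_inv_rev, swap_inv,
    ← mul_assoc]

theorem exists_isConj_card_coincidences_lt (hX : 7 ≤ Fintype.card X) {ρ δ : Perm X} {j₀ j₁ : X}
    (hρj₁ : ρ j₁ = δ j₁) (hρρj₁ : ρ (ρ j₁) ≠ j₁) (hj₀ : ρ j₀ = δ j₀) (hmoved : δ j₀ ≠ j₀)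
    (hne : j₀ ≠ j₁) :
    ∃ ρ', IsConj ρ ρ' ∧ ρ' j₁ = δ j₁ ∧ ρ' (ρ' j₁) ≠ j₁ ∧
      #(coincidences ρ' δ) < #(coincidences ρ δ) := by
  have avoid : ∀ E : Finset X, #E ≤ 4 → ∃ q ∉ ({j₁, δ j₁} : Finset X), q ∉ E := fun E hE =>
    exists_notMem_notMem_of_card_add_lt (by have := card_le_two (a := j₁) (b := δ j₁); omega)
  have key : ∃ a ∉ ({j₁, δ j₁} : Finset X), ∃ q ∉ ({j₁, δ j₁} : Finset X),
      #(coincidences (swap a q * ρ * swap a q) δ) < #(coincidences ρ δ) := by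
    -- The swap must fix `j₁` and `δ j₁`; if neither `j₀` nor `δ j₀` is available, then
    -- `ρ (ρ j₁) = j₁`.
    by_cases hδj₀ : δ j₀ = j₁
    · have hj₀δ : j₀ ≠ δ j₁ := fun h => hρρj₁ (by rw [hρj₁, ← h, hj₀, hδj₀])
      obtain ⟨q, hq, hqE⟩ := avoid _ card_le_four
      exact ⟨j₀, by simp [hne, hj₀δ], q, hq, card_coincidences_swap_conj_lt hj₀ hmoved hqE⟩
    · obtain ⟨q, hq, hqE⟩ := avoid _ card_le_four
      exact ⟨δ j₀, by simp [hne, hδj₀], q, hq,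
        card_coincidences_swap_apply_conj_lt hj₀ hmoved hqE⟩
  obtain ⟨a, ha, q, hq, hlt⟩ := key
  have hfixes : ∀ y ∈ ({j₁, δ j₁} : Finset X), swap a q y = y := fun y hy =>
    swap_apply_of_ne_of_ne (fun h => ha (h ▸ hy)) (fun h => hq (h ▸ hy))
  have hρ'j₁ : (swap a q * ρ * swap a q) j₁ = δ j₁ := by
    rw [mul_apply, mul_apply, hfixes j₁ (by simp), hρj₁, hfixes (δ j₁) (by simp)]
  refine ⟨_, isConj_iff.mpr ⟨swap a q, by rw [swap_inv]⟩, hρ'j₁, ?_, hlt⟩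
  rw [hρ'j₁, mul_apply, mul_apply, hfixes (δ j₁) (by simp), ← hρj₁]
  conv_rhs => rw [← hfixes j₁ (by simp)]
  exact (swap a q).injective.ne hρρj₁

theorem exists_isConj_coincidences_eq_singleton (hX : 7 ≤ Fintype.card X) {α δ : Perm X}
    {x j₁ : X} (hx : α (α x) ≠ x) (hj₁ : δ j₁ ≠ j₁) (hfix : (∀ t, α t ≠ t) ∨ (∀ t, δ t ≠ t)) :
    ∃ ρ, IsConj α ρ ∧ coincidences ρ δ = {j₁} := by
  classical
  set S := univ.filter fun ρ : Perm X => IsConj α ρ ∧ ρ j₁ = δ j₁ ∧ ρ (ρ j₁) ≠ j₁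
  have hS : S.Nonempty := by
    obtain ⟨σ, hσx, hσαx⟩ := MulAction.is_two_pretransitive_iff.mp
      (isMultiplyPretransitive X 2) (show x ≠ α x from fun h => hx (by rw [← h, ← h])) hj₁.symm
    rw [Perm.smul_def] at hσx hσαx
    refine ⟨σ * α * σ⁻¹, mem_filter.mpr ⟨mem_univ _, isConj_iff.mpr ⟨σ, rfl⟩, ?_, ?_⟩⟩
    · simp [← hσx, hσαx]
    · simpa [← hσx] using hx
  obtain ⟨ρ, hρS, hmin⟩ := exists_min_image S (fun ρ => #(coincidences ρ δ)) hS
  obtain ⟨hconj, hρj₁, hρρj₁⟩ := (mem_filter.mp hρS).2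
  refine ⟨ρ, hconj, eq_singleton_iff_unique_mem.mpr ⟨mem_coincidences.mpr hρj₁, ?_⟩⟩
  intro j₀ hj₀
  by_contra hne
  rw [mem_coincidences] at hj₀
  have hmoved : δ j₀ ≠ j₀ := by
    rcases hfix with hα | hδ
    · exact fun h => forall_apply_ne_self_of_isConj hconj hα j₀ (hj₀.trans h)
    · exact hδ j₀
  obtain ⟨ρ', hconj', hρ'j₁, hρ'ρ'j₁, hlt⟩ :=
    exists_isConj_card_coincidences_lt hX hρj₁ hρρj₁ hj₀ hmoved hne
  exact (hmin ρ' (mem_filter.mpr ⟨mem_univ _, hconj.trans hconj', hρ'j₁, hρ'ρ'j₁⟩)).not_gt hlt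

theorem coincidences_comm (ρ δ : Perm X) : coincidences ρ δ = coincidences δ ρ := by
  ext t
  simp only [mem_coincidences, eq_comm]

theorem card_fixedPoints_mul_eq_card_coincidences (ρ β : Perm X) :
    #(univ.filter fun i => (ρ * β) i = i) = #(coincidences ρ β⁻¹) := by
  rw [← card_map β.toEmbedding]
  congr 1
  ext i
  simp [eq_comm]

theorem card_fixedPoints_mul_comm (p q : Perm X) :
    #(univ.filter fun i => (p * q) i = i) = #(univ.filter fun i => (q * p) i = i) := by
  rw [card_fixedPoints_mul_eq_card_coincidences, card_fixedPoints_mul_eq_card_coincidences,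
    coincidences_comm q, ← card_coincidences_inv p⁻¹, inv_inv]

theorem card_fixedPoints_conj_mul_comm (σ α β : Perm X) :
    #(univ.filter fun i => (σ * α * σ⁻¹ * β) i = i) =
      #(univ.filter fun i => (σ⁻¹ * β * σ * α) i = i) := by
  rw [mul_assoc, mul_assoc, card_fixedPoints_mul_comm, mul_assoc, card_fixedPoints_mul_comm]

theorem exists_card_fixedPoints_conj_mul_eq_one (hX : 7 ≤ Fintype.card X) {α β : Perm X} {x : X}
    (hx : α (α x) ≠ x) (hβ : β ≠ 1) (hfix : (∀ t, α t ≠ t) ∨ (∀ t, β t ≠ t)) :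
    ∃ σ : Perm X, #(univ.filter fun i => (σ⁻¹ * α * σ * β) i = i) = 1 := by
  obtain ⟨j₁, hj₁⟩ : ∃ j, β⁻¹ j ≠ j := by
    by_contra! h
    exact hβ (inv_eq_one.mp (Perm.ext h))
  obtain ⟨ρ, hconj, hρ⟩ := exists_isConj_coincidences_eq_singleton hX hx hj₁
    (hfix.imp_right fun h t ht => h t (inv_eq_iff_eq.mp ht).symm)
  obtain ⟨c, rfl⟩ := isConj_iff.mp hconj
  exact ⟨c⁻¹, by rw [inv_inv, card_fixedPoints_mul_eq_card_coincidences, hρ, card_singleton]⟩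

end Equiv.Perm

theorem stmt11 (n : ℕ) (hn : 7 ≤ n) (α β : Equiv.Perm (Fin n)) (hα : α ≠ 1) (hβ : β ≠ 1)
    (hcyc : (∃ k ∈ α.cycleType, 3 ≤ k) ∨ (∃ k ∈ β.cycleType, 3 ≤ k))
    (hfpf : (∀ i : Fin n, α i ≠ i) ∨ (∀ i : Fin n, β i ≠ i)) :
    ∃ σ : Equiv.Perm (Fin n),
      (Finset.univ.filter fun i => (σ⁻¹ * α * σ * β) i = i).card = 1 := by
  have hX : 7 ≤ Fintype.card (Fin n) := by rwa [Fintype.card_fin]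
  rcases hcyc with ⟨k, hk, h3⟩ | ⟨k, hk, h3⟩
  · obtain ⟨x, hx⟩ := Equiv.Perm.exists_apply_apply_ne_of_mem_cycleType hk h3
    exact Equiv.Perm.exists_card_fixedPoints_conj_mul_eq_one hX hx hβ hfpf
  · obtain ⟨x, hx⟩ := Equiv.Perm.exists_apply_apply_ne_of_mem_cycleType hk h3
    obtain ⟨σ, hσ⟩ := Equiv.Perm.exists_card_fixedPoints_conj_mul_eq_one hX hx hα hfpf.symm
    exact ⟨σ⁻¹, by rwa [inv_inv, Equiv.Perm.card_fixedPoints_conj_mul_comm]⟩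
end

section
/- Let α, β ∈ S_n be nonidentity permutations with at least one of them fixed point free. If both α and β contain a cycle of length at least three, then there exists σ ∈ S_n such that σ⁻¹ασ·β has at least two fixed points. -/
/-- Any three distinct points can be sent to any three distinct points by a permutation. -/
lemma triple_map {X : Type*} [DecidableEq X] (a b c r q p : X)
    (hab : a ≠ b) (hac : a ≠ c) (hbc : b ≠ c)
    (hrq : r ≠ q) (hrp : r ≠ p) (hqp : q ≠ p) :
    ∃ σ : Equiv.Perm X, σ a = r ∧ σ b = q ∧ σ c = p := by
  set σ1 : Equiv.Perm X := Equiv.swap a r with hσ1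
  set σ2 : Equiv.Perm X := Equiv.swap (σ1 b) q with hσ2
  set σ3 : Equiv.Perm X := Equiv.swap (σ2 (σ1 c)) p with hσ3
  have h1a : σ1 a = r := Equiv.swap_apply_left a r
  have h1b_ne : σ1 b ≠ r := by
    intro h; exact hab (σ1.injective (by rw [h1a, h]))
  have h2r : σ2 r = r := Equiv.swap_apply_of_ne_of_ne h1b_ne.symm hrq
  have h2b : σ2 (σ1 b) = q := Equiv.swap_apply_left _ _
  have h3c_ne_r : σ2 (σ1 c) ≠ r := by
    intro h; exact hac (σ1.injective (σ2.injective (by rw [h1a, h2r, h])))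
  have h3c_ne_q : σ2 (σ1 c) ≠ q := by
    intro h; exact hbc (σ1.injective (σ2.injective (by rw [h2b, h])))
  refine ⟨σ3 * σ2 * σ1, ?_, ?_, ?_⟩
  · show σ3 (σ2 (σ1 a)) = r
    rw [h1a, h2r]
    exact Equiv.swap_apply_of_ne_of_ne h3c_ne_r.symm hrp
  · show σ3 (σ2 (σ1 b)) = q
    rw [h2b]
    exact Equiv.swap_apply_of_ne_of_ne h3c_ne_q.symm hqp
  · show σ3 (σ2 (σ1 c)) = p
    exact Equiv.swap_apply_left _ _

/-- A permutation with a cycle of length ≥ 3 has a point with β (β a) ≠ a. -/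
lemma exists_orbit_three {X : Type*} [DecidableEq X] [Fintype X] (β : Equiv.Perm X)
    (hc : ∃ k ∈ β.cycleType, 3 ≤ k) : ∃ a : X, β (β a) ≠ a := by
  by_contra h
  push_neg at h
  have hsq : β ^ 2 = 1 := by
    ext x
    simp [pow_succ, pow_one, h x]
  have hord : orderOf β ∣ 2 := orderOf_dvd_of_pow_eq_one hsq
  obtain ⟨k, hk, hk3⟩ := hc
  have hdvd : k ∣ orderOf β := by
    rw [← Equiv.Perm.lcm_cycleType]
    exact Multiset.dvd_lcm hk
  have : k ∣ 2 := hdvd.trans hord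
  have hle : k ≤ 2 := Nat.le_of_dvd (by norm_num) this
  omega

theorem stmt12 (n : ℕ) (hn : 4 ≤ n) (α β : Equiv.Perm (Fin n)) (hα : α ≠ 1) (hβ : β ≠ 1)
    (hfpf : (∀ i : Fin n, α i ≠ i) ∨ (∀ i : Fin n, β i ≠ i))
    (hcα : ∃ k ∈ α.cycleType, 3 ≤ k) (hcβ : ∃ k ∈ β.cycleType, 3 ≤ k) :
    ∃ σ : Equiv.Perm (Fin n),
      2 ≤ (Finset.univ.filter fun i => (σ⁻¹ * α * σ * β) i = i).card := by
  obtain ⟨a, ha⟩ := exists_orbit_three β hcβ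
  obtain ⟨p, hp⟩ := exists_orbit_three α hcα
  -- distinctness facts
  have hba : β a ≠ a := by intro h; apply ha; rw [h, h]
  have hb2b : β (β a) ≠ β a := fun h => hba (β.injective h)
  have hpa : α p ≠ p := by intro h; apply hp; rw [h, h]
  have hp2p : α (α p) ≠ α p := fun h => hpa (α.injective h)
  -- σ sends (β²a, βa, a) to (p, αp, α²p)
  obtain ⟨σ, hσ1, hσ2, hσ3⟩ := triple_map (β (β a)) (β a) a p (α p) (α (α p))
    hb2b (ha) (hba) (Ne.symm hpa) (fun h => hp h.symm) (Ne.symm hp2p)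
  refine ⟨σ, ?_⟩
  have hfix1 : (σ⁻¹ * α * σ * β) a = a := by
    simp only [Equiv.Perm.mul_apply]
    rw [hσ2]
    rw [show α (α p) = σ a from hσ3.symm]
    exact σ.symm_apply_apply a
  have hfix2 : (σ⁻¹ * α * σ * β) (β a) = β a := by
    simp only [Equiv.Perm.mul_apply]
    rw [hσ1]
    rw [show α p = σ (β a) from hσ2.symm]
    exact σ.symm_apply_apply (β a)
  have hsub : ({a, β a} : Finset (Fin n)) ⊆
      Finset.univ.filter fun i => (σ⁻¹ * α * σ * β) i = i := by
    intro x hx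
    simp only [Finset.mem_insert, Finset.mem_singleton] at hx
    rcases hx with rfl | rfl
    · exact Finset.mem_filter.2 ⟨Finset.mem_univ _, hfix1⟩
    · exact Finset.mem_filter.2 ⟨Finset.mem_univ _, hfix2⟩
  calc 2 = ({a, β a} : Finset (Fin n)).card := (Finset.card_pair (Ne.symm hba)).symm
    _ ≤ _ := Finset.card_le_card hsub
end

section
/- Let α, β ∈ S_n be nonidentity permutations with at least one of them fixed point free. If both α and β move at least 4 points, then there exists σ ∈ S_n such that σ⁻¹ασ·β has at least two fixed points. -/
/-!
Choose `a, b` such that `a, β a, b, β b` are four distinct points, and `x, y` such that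
`x, α⁻¹ x, y, α⁻¹ y` are four distinct points (both exist because each permutation moves at
least four points). Any permutation `σ` sending the first quadruple to the second makes `a` and
`b` fixed points of `σ⁻¹ α σ β`: for instance `β a ↦ α⁻¹ x ↦ x ↦ a` under `σ`, `α`, `σ⁻¹`.
-/

namespace Equiv.Perm

variable {α : Type*}

theorem conj_mul_apply_eq_self_iff (σ τ π : Perm α) (i : α) :
    (σ⁻¹ * τ * σ * π) i = i ↔ τ (σ (π i)) = σ i := by
  simp [Equiv.symm_apply_eq]

theorem exists_injective_four_of_four_le_card_support [DecidableEq α] [Fintype α] {γ : Perm α}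
    (h : 4 ≤ γ.support.card) : ∃ a b : α, Function.Injective ![a, γ a, b, γ b] := by
  obtain ⟨a, ha⟩ : γ.support.Nonempty := Finset.card_pos.mp (by omega)
  obtain ⟨b, hb⟩ : (γ.support \ {a, γ a, γ⁻¹ a}).Nonempty := by
    have := Finset.le_card_sdiff {a, γ a, γ⁻¹ a} γ.support
    have := Finset.card_le_three (a := a) (b := γ a) (c := γ⁻¹ a)
    exact Finset.card_pos.mp (by omega)
  simp only [Finset.mem_sdiff, Finset.mem_insert, Finset.mem_singleton, not_or] at hb
  obtain ⟨hb, hba, hbγa, hbγ⟩ := hb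
  rw [mem_support] at ha hb
  rw [eq_inv_iff_eq] at hbγ
  refine ⟨a, b, ?_⟩
  rw [← List.nodup_ofFn]
  simp [*, Ne.symm]

end Equiv.Perm

theorem stmt13_general (n : ℕ) (α β : Equiv.Perm (Fin n))
    (hmα : 4 ≤ α.support.card) (hmβ : 4 ≤ β.support.card) :
    ∃ σ : Equiv.Perm (Fin n),
      2 ≤ (Finset.univ.filter fun i => (σ⁻¹ * α * σ * β) i = i).card := by
  obtain ⟨a, b, hab⟩ := Equiv.Perm.exists_injective_four_of_four_le_card_support hmβ
  obtain ⟨x, y, hxy⟩ :=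
    Equiv.Perm.exists_injective_four_of_four_le_card_support (γ := α⁻¹)
      (by rwa [Equiv.Perm.support_inv])
  obtain ⟨σ, hσ⟩ := Equiv.Perm.exists_extending_pair _ _ hab hxy
  have hσa : σ a = x := hσ 0
  have hσβa : σ (β a) = α⁻¹ x := hσ 1
  have hσb : σ b = y := hσ 2
  have hσβb : σ (β b) = α⁻¹ y := hσ 3
  refine ⟨σ, Finset.one_lt_card.2 ⟨a, ?_, b, ?_, hab.ne (show (0 : Fin 4) ≠ 2 by decide)⟩⟩ <;>
    simp only [Finset.mem_filter, Finset.mem_univ, true_and,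
      Equiv.Perm.conj_mul_apply_eq_self_iff, hσa, hσβa, hσb, hσβb, Equiv.Perm.coe_inv,
      Equiv.apply_symm_apply]

theorem stmt13 (n : ℕ) (hn : 4 ≤ n) (α β : Equiv.Perm (Fin n)) (hα : α ≠ 1) (hβ : β ≠ 1)
    (hfpf : (∀ i : Fin n, α i ≠ i) ∨ (∀ i : Fin n, β i ≠ i))
    (hmα : 4 ≤ α.support.card) (hmβ : 4 ≤ β.support.card) :
    ∃ σ : Equiv.Perm (Fin n),
      2 ≤ (Finset.univ.filter fun i => (σ⁻¹ * α * σ * β) i = i).card :=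
  stmt13_general n α β hmα hmβ
end

section
/- Let α, β ∈ S_n with at least one fixed point free. If both α and β contain a transposition in their disjoint cycle decomposition, then there exists σ ∈ S_n such that σ⁻¹ασ·β has at least two fixed points. -/
/-!
Let `α` swap `a, b` and `β` swap `c, d`. Since `Perm X` acts 2-transitively, some `σ` sends
`c ↦ a` and `d ↦ b`; then `σ⁻¹ α σ β` sends `c ↦ d ↦ b ↦ a ↦ c` and symmetrically fixes `d`.
-/

namespace Equiv.Perm

variable {X : Type*}

theorem exists_apply_eq_apply_eq_of_two_mem_cycleType [DecidableEq X] [Fintype X] {f : Perm X}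
    (h : 2 ∈ f.cycleType) : ∃ a b : X, a ≠ b ∧ f a = b ∧ f b = a := by
  obtain ⟨g, hg, hcard⟩ := Multiset.mem_map.mp (cycleType_def f ▸ h)
  obtain ⟨a, b, hab, rfl⟩ := card_support_eq_two.mp hcard
  have hagree := (mem_cycleFactorsFinset_iff.mp hg).2
  refine ⟨a, b, hab, ?_, ?_⟩
  · rw [← hagree a (by simp [hab]), swap_apply_left]
  · rw [← hagree b (by simp [hab]), swap_apply_right]

theorem exists_apply_eq_apply_eq {a b c d : X} (hab : a ≠ b) (hcd : c ≠ d) :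
    ∃ σ : Perm X, σ a = c ∧ σ b = d :=
  MulAction.is_two_pretransitive_iff.mp (isMultiplyPretransitive X 2) hab hcd

theorem conj_mul_apply_eq_self {α β σ : Perm X} {a b c d : X} (hβ : β c = d) (hσd : σ d = b)
    (hα : α b = a) (hσc : σ c = a) : (σ⁻¹ * α * σ * β) c = c := by
  rw [mul_apply, mul_apply, mul_apply, hβ, hσd, hα, inv_eq_iff_eq, hσc]

end Equiv.Perm

open Equiv.Perm in
theorem stmt14_general (n : ℕ) (α β : Equiv.Perm (Fin n))
    (hcα : 2 ∈ α.cycleType) (hcβ : 2 ∈ β.cycleType) :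
    ∃ σ : Equiv.Perm (Fin n),
      2 ≤ (Finset.univ.filter fun i => (σ⁻¹ * α * σ * β) i = i).card := by
  obtain ⟨a, b, hab, hαa, hαb⟩ := exists_apply_eq_apply_eq_of_two_mem_cycleType hcα
  obtain ⟨c, d, hcd, hβc, hβd⟩ := exists_apply_eq_apply_eq_of_two_mem_cycleType hcβ
  obtain ⟨σ, hσc, hσd⟩ := exists_apply_eq_apply_eq hcd hab
  refine ⟨σ, Finset.one_lt_card.mpr ⟨c, ?_, d, ?_, hcd⟩⟩
  · exact Finset.mem_filter.mpr ⟨Finset.mem_univ c, conj_mul_apply_eq_self hβc hσd hαb hσc⟩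
  · exact Finset.mem_filter.mpr ⟨Finset.mem_univ d, conj_mul_apply_eq_self hβd hσc hαa hσd⟩

theorem stmt14 (n : ℕ) (hn : 4 ≤ n) (α β : Equiv.Perm (Fin n))
    (hfpf : (∀ i : Fin n, α i ≠ i) ∨ (∀ i : Fin n, β i ≠ i))
    (hcα : 2 ∈ α.cycleType) (hcβ : 2 ∈ β.cycleType) :
    ∃ σ : Equiv.Perm (Fin n),
      2 ≤ (Finset.univ.filter fun i => (σ⁻¹ * α * σ * β) i = i).card :=
  stmt14_general n α β hcα hcβ
end

section
/- Let n > 5 and α, β ∈ S_n nonidentity. Then the product α^{S_n} β^{S_n} is never a single conjugacy class. -/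
open Equiv Finset
open scoped Nat

namespace Equiv.Perm

variable {X : Type*} [DecidableEq X]

theorem isConj_swap_mul_mul_swap (β : Perm X) (a b : X) :
    IsConj β (swap a b * β * swap a b) :=
  isConj_iff.2 ⟨swap a b, by rw [swap_inv]⟩

theorem exists_isConj_apply_ne_self {β : Perm X} (hβ : β ≠ 1) (t : X) :
    ∃ β', IsConj β β' ∧ β' t ≠ t := by
  obtain ⟨x, hx⟩ := DFunLike.ne_iff.1 hβ
  refine ⟨swap x t * β * swap x t, isConj_swap_mul_mul_swap β x t, ?_⟩
  rw [mul_apply, mul_apply, swap_apply_right, Ne, swap_apply_eq_iff, swap_apply_right]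
  exact hx

theorem exists_isConj_apply_eq {β : Perm X} (hβ : β ≠ 1) {t u : X} (htu : t ≠ u) :
    ∃ β', IsConj β β' ∧ β' t = u := by
  obtain ⟨β₁, hconj, ht⟩ := exists_isConj_apply_ne_self hβ t
  refine ⟨swap (β₁ t) u * β₁ * swap (β₁ t) u,
    hconj.trans (isConj_swap_mul_mul_swap β₁ _ _), ?_⟩
  rw [mul_apply, mul_apply, swap_apply_of_ne_of_ne ht.symm htu, swap_apply_left]

variable [Fintype X]

theorem card_support_eq_of_isConj {a b : Perm X} (h : IsConj a b) :
    #a.support = #b.support := by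
  obtain ⟨c, rfl⟩ := isConj_iff.1 h
  exact card_support_conj.symm

theorem card_support_mul_comm (a b : Perm X) : #(a * b).support = #(b * a).support := by
  rw [← card_support_conj (σ := a⁻¹) (τ := a * b)]
  group

theorem exists_isConj_apply_eq_apply_ne (hX : 5 ≤ Fintype.card X) {β : Perm X} (hβ : β ≠ 1)
    {t u v q : X} (htu : t ≠ u) (hvt : v ≠ t) (hvu : v ≠ u) (hqv : q ≠ v) :
    ∃ β', IsConj β β' ∧ β' t = u ∧ β' v ≠ q := by
  obtain ⟨β₁, hconj, ht⟩ := exists_isConj_apply_eq hβ htu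
  by_cases hv : β₁ v = q
  · obtain ⟨z, -, hz⟩ := exists_mem_notMem_of_card_lt_card (s := {t, u, v, q}) (t := univ)
      (card_le_four.trans_lt (by rw [card_univ]; omega))
    simp only [mem_insert, mem_singleton, not_or] at hz
    obtain ⟨hzt, hzu, hzv, hzq⟩ := hz
    refine ⟨swap v z * β₁ * swap v z, hconj.trans (isConj_swap_mul_mul_swap β₁ v z), ?_, ?_⟩
    · rw [mul_apply, mul_apply, swap_apply_of_ne_of_ne hvt.symm (Ne.symm hzt), ht,
        swap_apply_of_ne_of_ne hvu.symm (Ne.symm hzu)]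
    · rw [mul_apply, mul_apply, swap_apply_left, Ne, swap_apply_eq_iff,
        swap_apply_of_ne_of_ne hqv (Ne.symm hzq), ← hv]
      exact β₁.injective.ne hzv
  · exact ⟨β₁, hconj, ht, hv⟩

theorem support_swap_mul_mul_swap_ssubset {g : Perm X} {t u v : X} (htu : t ≠ u) (htv : t ≠ v)
    (hgt : g t = u) (hgu : g u ≠ u) (hgv : g v ≠ v) :
    (swap u t * g * swap u v).support ⊂ g.support := by
  refine ssubset_iff_of_subset (fun z hz => ?_) |>.2 ⟨t, by simpa [hgt] using htu.symm, ?_⟩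
  · by_contra hgz
    rw [notMem_support] at hgz
    have hzu : z ≠ u := by rintro rfl; exact hgu hgz
    have hzv : z ≠ v := by rintro rfl; exact hgv hgz
    have hzt : z ≠ t := by rintro rfl; exact htu (hgz.symm.trans hgt)
    rw [mem_support, mul_apply, mul_apply, swap_apply_of_ne_of_ne hzu hzv, hgz,
      swap_apply_of_ne_of_ne hzu hzt] at hz
    exact hz rfl
  · rw [notMem_support, mul_apply, mul_apply, swap_apply_of_ne_of_ne htu htv, hgt,
      swap_apply_left]

theorem exists_isConj_card_support_mul_lt (hX : 5 ≤ Fintype.card X) {α β : Perm X} (hβ : β ≠ 1)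
    {u v : X} (hu : α u = u) (hv : α v ≠ v) :
    ∃ β₁ β₂, IsConj β β₁ ∧ IsConj β β₂ ∧ #(α * β₂).support < #(α * β₁).support := by
  have huv : u ≠ v := by rintro rfl; exact hv hu
  have htu : α v ≠ u := by rw [← hu]; exact α.injective.ne huv.symm
  obtain ⟨β₁, hconj, ht, hv'⟩ := exists_isConj_apply_eq_apply_ne hX hβ htu hv.symm huv.symm
    (q := α⁻¹ v) (by rwa [Ne, inv_eq_iff_eq, eq_comm])
  refine ⟨β₁, swap u v * β₁ * swap u v, hconj, hconj.trans (isConj_swap_mul_mul_swap β₁ u v),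
    card_lt_card ?_⟩
  have hcomm : α * swap u v = swap u (α v) * α := by
    conv_rhs => rw [← hu, swap_apply_apply, inv_mul_cancel_right]
  rw [← mul_assoc, ← mul_assoc, hcomm, mul_assoc _ α]
  refine support_swap_mul_mul_swap_ssubset htu hv (by rw [mul_apply, ht, hu]) ?_ ?_
  · exact fun h => htu (β₁.injective (ht.trans (α.injective (h.trans hu.symm)).symm))
  · rwa [mul_apply, Ne, ← eq_inv_iff_eq]

theorem card_filter_conj_apply_eq_congr (β : Perm X) {x y y' : X} (hy : y ≠ x) (hy' : y' ≠ x) :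
    #{σ : Perm X | (σ * β * σ⁻¹) x = y} = #{σ : Perm X | (σ * β * σ⁻¹) x = y'} := by
  refine card_equiv (Equiv.mulLeft (swap y y')) fun σ => ?_
  have hconj : swap y y' * σ * β * (swap y y' * σ)⁻¹ = swap y y' * (σ * β * σ⁻¹) * swap y y' := by
    rw [mul_inv_rev, swap_inv]
    group
  rw [mem_filter, mem_filter, coe_mulLeft, hconj]
  simp only [mem_univ, true_and, mul_apply]
  rw [swap_apply_of_ne_of_ne hy.symm hy'.symm, swap_apply_eq_iff, swap_apply_right]

theorem card_sub_one_mul_card_filter_conj_apply_eq {β : Perm X} (hβ : ∀ x, β x ≠ x) {x y : X}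
    (hxy : x ≠ y) :
    (Fintype.card X - 1) * #{σ : Perm X | (σ * β * σ⁻¹) x = y} = (Fintype.card X)! := by
  have hfib := card_eq_sum_card_fiberwise (f := fun σ : Perm X => (σ * β * σ⁻¹) x)
    (s := univ) (t := univ) fun _ _ => mem_univ _
  -- the fibre over `x` is empty and the fibres over the other points all have the same size
  have hx : #{σ : Perm X | (σ * β * σ⁻¹) x = x} = 0 := by
    refine card_eq_zero.2 (filter_false_of_mem fun σ _ h => hβ (σ⁻¹ x) ?_)
    rwa [mul_apply, mul_apply, ← eq_inv_iff_eq] at h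
  rw [card_univ, Fintype.card_perm, ← add_sum_erase _ _ (mem_univ x), hx, zero_add,
    sum_const_nat fun y' hy' => card_filter_conj_apply_eq_congr β (ne_of_mem_erase hy')
      hxy.symm, card_erase_of_mem (mem_univ x), card_univ] at hfib
  exact hfib.symm

theorem card_sub_one_mul_sum_card_fixed {α β : Perm X} (hα : ∀ x, α x ≠ x)
    (hβ : ∀ x, β x ≠ x) :
    (Fintype.card X - 1) * ∑ σ : Perm X, #{x | (α * (σ * β * σ⁻¹)) x = x} =
      Fintype.card X * (Fintype.card X)! := by
  have hfix (σ : Perm X) : #{x | (α * (σ * β * σ⁻¹)) x = x} =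
      ∑ x, if (σ * β * σ⁻¹) x = α⁻¹ x then 1 else 0 := by
    simp only [card_filter, mul_apply, ← eq_inv_iff_eq]
  simp only [hfix]
  rw [sum_comm, mul_sum]
  simp only [← card_filter]
  rw [sum_const_nat fun x _ => card_sub_one_mul_card_filter_conj_apply_eq hβ
    fun h => hα x (eq_inv_iff_eq.1 h), card_univ]

theorem not_forall_card_support_mul_conj_eq (hX : 3 ≤ Fintype.card X) {α β : Perm X}
    (hα : ∀ x, α x ≠ x) (hβ : ∀ x, β x ≠ x) (c : ℕ) :
    ¬ ∀ σ : Perm X, #(α * (σ * β * σ⁻¹)).support = c := by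
  intro h
  have hfix (g : Perm X) : #{x | g x = x} = Fintype.card X - #g.support := by
    have := card_filter_add_card_filter_not (s := univ) fun x => g x = x
    rw [card_univ] at this
    exact Nat.eq_sub_of_add_eq this
  have hsum := card_sub_one_mul_sum_card_fixed hα hβ
  simp only [hfix, h, sum_const, card_univ, Fintype.card_perm, smul_eq_mul] at hsum
  have hd : (Fintype.card X - 1) * (Fintype.card X - c) = Fintype.card X :=
    Nat.eq_of_mul_eq_mul_left (Nat.factorial_pos (Fintype.card X)) (by linarith)
  generalize Fintype.card X - c = d at hd
  rcases d with _ | _ | d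
  · omega
  · omega
  · have := Nat.mul_le_mul_left (Fintype.card X - 1) (show 2 ≤ d + 1 + 1 by omega)
    omega

theorem not_forall_card_support_mul_eq (hX : 5 ≤ Fintype.card X) {α β : Perm X} (hα : α ≠ 1)
    (hβ : β ≠ 1) (c : ℕ) :
    ¬ ∀ a b, IsConj α a → IsConj β b → #(a * b).support = c := by
  intro h
  by_cases hfixα : ∃ u, α u = u
  · obtain ⟨u, hu⟩ := hfixα
    obtain ⟨v, hv⟩ := DFunLike.ne_iff.1 hα
    obtain ⟨β₁, β₂, h₁, h₂, hlt⟩ := exists_isConj_card_support_mul_lt hX hβ hu hv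
    rw [h α β₁ (.refl _) h₁, h α β₂ (.refl _) h₂] at hlt
    exact hlt.false
  by_cases hfixβ : ∃ u, β u = u
  · obtain ⟨u, hu⟩ := hfixβ
    obtain ⟨v, hv⟩ := DFunLike.ne_iff.1 hβ
    obtain ⟨α₁, α₂, h₁, h₂, hlt⟩ := exists_isConj_card_support_mul_lt hX hα hu hv
    rw [card_support_mul_comm, card_support_mul_comm β, h α₁ β h₁ (.refl _),
      h α₂ β h₂ (.refl _)] at hlt
    exact hlt.false
  push Not at hfixα hfixβ
  exact not_forall_card_support_mul_conj_eq (by omega) hfixα hfixβ c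
    fun σ => h α _ (.refl _) (isConj_iff.2 ⟨σ, rfl⟩)

end Equiv.Perm

theorem stmt16 (n : ℕ) (hn : 5 < n) (α β : Equiv.Perm (Fin n)) (hα : α ≠ 1) (hβ : β ≠ 1) :
    ¬ ∃ γ : Equiv.Perm (Fin n), setProd (conjClass α) (conjClass β) = conjClass γ := by
  rintro ⟨γ, hγ⟩
  refine Perm.not_forall_card_support_mul_eq (by simpa using hn.le) hα hβ #γ.support
    fun a b ha hb => ?_
  have hab : a * b ∈ conjClass γ := hγ ▸ ⟨a, ha, b, hb, rfl⟩
  exact (Perm.card_support_eq_of_isConj hab).symm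
end
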